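/- Let G be a K5-minor-free bipartite graph with at least one edge and with no induced cycle of length greater than or equal to 6. Then the element (1, …, 1, 2) of ℤ^E × ℤ (all edge-coordinates equal to 1, last coordinate 2) lies in int(M_G); moreover, if int(M_G) = y + M_G for some y ∈ int(M_G), then int(M_G) = (1, …, 1, 2) + M_G. -/

import Mathlib

/-! Basic definitions for cut monoids of finite simple graphs. -/

open Classical in
/-- The cut vector of a vertex set `A`, as a function on `Sym2 V`:
value `1` on pairs with exactly one element in `A`, and `0` otherwise. -/
noncomputable def cutVec {V : Type} (A : Set V) : Sym2 V → ℤ :=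
  Sym2.lift ⟨fun v w => if ((v ∈ A) ↔ (w ∈ A)) then 0 else 1,
    fun v w => if_congr iff_comm rfl rfl⟩

variable {V : Type}

/-- The generators `(δ_A, 1)` of the cut monoid of `G`. -/
def cutGens (G : SimpleGraph V) : Set ((G.edgeSet → ℤ) × ℤ) :=
  {p | ∃ A : Set V, p = (fun e => cutVec A e.1, 1)}

/-- The cut monoid `M_G` of a graph `G`. -/
def cutMonoid (G : SimpleGraph V) : AddSubmonoid ((G.edgeSet → ℤ) × ℤ) :=
  AddSubmonoid.closure (cutGens G)

/-- The group `gp(M_G)` generated by the cut monoid. -/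
def cutGroup (G : SimpleGraph V) : AddSubgroup ((G.edgeSet → ℤ) × ℤ) :=
  AddSubgroup.closure (cutGens G)

/-- `M_G` is normal: every `x ∈ gp(M_G)` with `n • x ∈ M_G` for some `n ≥ 1` lies in `M_G`. -/
def CutNormal (G : SimpleGraph V) : Prop :=
  ∀ x ∈ cutGroup G, (∃ n : ℕ, 1 ≤ n ∧ n • x ∈ cutMonoid G) → x ∈ cutMonoid G

/-- `M_G` is seminormal: every `x ∈ gp(M_G)` with `2 • x ∈ M_G` and `3 • x ∈ M_G`
lies in `M_G`. -/
def CutSeminormal (G : SimpleGraph V) : Prop :=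
  ∀ x ∈ cutGroup G, 2 • x ∈ cutMonoid G → 3 • x ∈ cutMonoid G → x ∈ cutMonoid G

/-- Generators of the cone of `M_G`: nonnegative real multiples of the `(δ_A, 1)`. -/
noncomputable def cutConeGens (G : SimpleGraph V) : Set ((G.edgeSet → ℝ) × ℝ) :=
  {q | ∃ (c : ℝ) (A : Set V), 0 ≤ c ∧
    q = c • ((fun e => ((cutVec A e.1 : ℤ) : ℝ), (1 : ℝ)))}

/-- The cone `cone(M_G)`: all finite nonnegative real combinations of the `(δ_A, 1)`. -/
noncomputable def cutCone (G : SimpleGraph V) : Set ((G.edgeSet → ℝ) × ℝ) :=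
  (AddSubmonoid.closure (cutConeGens G) : Set ((G.edgeSet → ℝ) × ℝ))

/-- The canonical map from `ℤ^E × ℤ` to `ℝ^E × ℝ`. -/
noncomputable def toRealCut (G : SimpleGraph V) (p : (G.edgeSet → ℤ) × ℤ) :
    (G.edgeSet → ℝ) × ℝ :=
  (fun e => ((p.1 e : ℤ) : ℝ), ((p.2 : ℤ) : ℝ))

/-- `int(M_G)`: elements of `M_G` mapping into the topological interior of `cone(M_G)`. -/
noncomputable def cutInterior (G : SimpleGraph V) : Set ((G.edgeSet → ℤ) × ℤ) :=
  {p | p ∈ cutMonoid G ∧ toRealCut G p ∈ interior (cutCone G)}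

/-- The set of last coordinates `α ∈ ℕ` realized by elements of `int(M_G)`;
its least element is `m(G)`. -/
noncomputable def cutDegrees (G : SimpleGraph V) : Set ℕ :=
  {α | ∃ x : G.edgeSet → ℤ, ((x, (α : ℤ)) : (G.edgeSet → ℤ) × ℤ) ∈ cutInterior G}

/-- `H` is a minor of `G`: branch sets `B u` are nonempty, pairwise disjoint,
induce connected subgraphs, and edges of `H` are witnessed by edges of `G`. -/
def GraphMinor {W V : Type} (H : SimpleGraph W) (G : SimpleGraph V) : Prop :=
  ∃ B : W → Set V,
    (∀ u, (B u).Nonempty) ∧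
    (∀ u v, u ≠ v → Disjoint (B u) (B v)) ∧
    (∀ u, (G.induce (B u)).Connected) ∧
    (∀ u v, H.Adj u v → ∃ a ∈ B u, ∃ b ∈ B v, G.Adj a b)

/-- `G` is `K₅`-minor-free. -/
def K5Free (G : SimpleGraph V) : Prop :=
  ¬ GraphMinor (⊤ : SimpleGraph (Fin 5)) G

/-- `G` is bipartite: vertices split into two parts so every edge joins the parts. -/
def BipartiteG (G : SimpleGraph V) : Prop :=
  ∃ s : Set V, ∀ ⦃v w⦄, G.Adj v w → ((v ∈ s ∧ w ∉ s) ∨ (w ∈ s ∧ v ∉ s))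

/-- `G` has an induced cycle of length `n` (n ≥ 3): an induced-subgraph copy of the
cycle graph of length `n`. -/
def HasInducedCycleLen (G : SimpleGraph V) (n : ℕ) : Prop :=
  3 ≤ n ∧ Nonempty (SimpleGraph.cycleGraph n ↪g G)

/-- `G` contains a triangle. -/
def HasTriangle (G : SimpleGraph V) : Prop :=
  ∃ a b c, G.Adj a b ∧ G.Adj b c ∧ G.Adj a c

/-- `G` is chordal: every induced cycle is a triangle. -/
def ChordalG (G : SimpleGraph V) : Prop :=
  ∀ n, HasInducedCycleLen G n → n = 3

/-- `G` is bridgeless: every edge lies on some cycle. -/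
def BridgelessG (G : SimpleGraph V) : Prop :=
  ∀ e ∈ G.edgeSet, ∃ (v : V) (c : G.Walk v v), c.IsCycle ∧ e ∈ c.edges

/-- `G` is (isomorphic to) a cycle of length `n`. -/
def IsCycleOfLen (G : SimpleGraph V) (n : ℕ) : Prop :=
  3 ≤ n ∧ Nonempty (G ≃g SimpleGraph.cycleGraph n)

/-- `G` is a cycle. -/
def IsCycleGraph (G : SimpleGraph V) : Prop :=
  ∃ n, IsCycleOfLen G n

/-- `G` is a `0`-sum of `G1` and `G2`: copies of `G1`, `G2` cover `G`,
overlap in exactly one vertex, and every edge comes from `G1` or `G2`. -/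
def IsZeroSumDecomp {V1 V2 : Type} (G : SimpleGraph V) (G1 : SimpleGraph V1)
    (G2 : SimpleGraph V2) : Prop :=
  ∃ (f1 : V1 ↪ V) (f2 : V2 ↪ V),
    Set.range f1 ∪ Set.range f2 = Set.univ ∧
    (∃ v, Set.range f1 ∩ Set.range f2 = {v}) ∧
    (∀ a b, G.Adj a b ↔
      ((∃ x y, f1 x = a ∧ f1 y = b ∧ G1.Adj x y) ∨
       (∃ x y, f2 x = a ∧ f2 y = b ∧ G2.Adj x y)))

/-- `G` is a `1`-sum of `G1` and `G2` along a common edge. -/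
def IsOneSumDecomp {V1 V2 : Type} (G : SimpleGraph V) (G1 : SimpleGraph V1)
    (G2 : SimpleGraph V2) : Prop :=
  ∃ (f1 : V1 ↪ V) (f2 : V2 ↪ V) (v w : V),
    v ≠ w ∧
    Set.range f1 ∪ Set.range f2 = Set.univ ∧
    Set.range f1 ∩ Set.range f2 = {v, w} ∧
    (∃ x y, f1 x = v ∧ f1 y = w ∧ G1.Adj x y) ∧
    (∃ x y, f2 x = v ∧ f2 y = w ∧ G2.Adj x y) ∧
    (∀ a b, G.Adj a b ↔
      ((∃ x y, f1 x = a ∧ f1 y = b ∧ G1.Adj x y) ∨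
       (∃ x y, f2 x = a ∧ f2 y = b ∧ G2.Adj x y)))

/-- Ring graphs: obtained, up to adding isolated vertices, from finitely many
(finite) trees and cycles by iterated `0`-sums and `1`-sums. -/
inductive IsRingGraph : {V : Type} → SimpleGraph V → Prop
  | tree {V : Type} (G : SimpleGraph V) :
      Finite V → G.Connected → G.IsAcyclic → IsRingGraph G
  | cycle {V : Type} (G : SimpleGraph V) : IsCycleGraph G → IsRingGraph G
  | zeroSum {V1 V2 V : Type} {G1 : SimpleGraph V1} {G2 : SimpleGraph V2}
      {G : SimpleGraph V} :
      IsRingGraph G1 → IsRingGraph G2 → IsZeroSumDecomp G G1 G2 → IsRingGraph G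
  | oneSum {V1 V2 V : Type} {G1 : SimpleGraph V1} {G2 : SimpleGraph V2}
      {G : SimpleGraph V} :
      IsRingGraph G1 → IsRingGraph G2 → IsOneSumDecomp G G1 G2 → IsRingGraph G
  | addIsolated {V W : Type} {G : SimpleGraph V} {H : SimpleGraph W} (f : V ↪ W) :
      IsRingGraph G → (∀ a b, H.Adj a b ↔ ∃ x y, f x = a ∧ f y = b ∧ G.Adj x y) →
      IsRingGraph H

/-- An edge of an induced subgraph is an edge of the ambient graph. -/
lemma induce_edge_mem (G : SimpleGraph V) (s : Set V) (e : Sym2 s)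
    (he : e ∈ (G.induce s).edgeSet) : e.map Subtype.val ∈ G.edgeSet := by
  induction e using Sym2.ind with
  | _ a b =>
    rw [Sym2.map_pair_eq, SimpleGraph.mem_edgeSet]
    exact he

/-- Restriction of a vector indexed by the edges of `G` to the edges of the
subgraph of `G` induced on `s`. -/
noncomputable def restrictCut (G : SimpleGraph V) (s : Set V) (p : G.edgeSet → ℤ) :
    (G.induce s).edgeSet → ℤ :=
  fun e => p ⟨e.1.map Subtype.val, induce_edge_mem G s e.1 e.2⟩


/-!
Every edge is cut by exactly half of the `2^|V|` vertex subsets, so the average of the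
generators `(δ_A, 1)` is `(1/2, …, 1/2, 1)`. The generators span `ℝ^E × ℝ` (the combination
`δ_{a} + δ_{b} - δ_{a,b} - δ_∅` is twice the unit vector of the edge `ab`), hence a strictly
positive combination of them is an interior point of the cone; so `(1, …, 1, 2)` is interior.
It lies in `M_G` because it equals `(δ_S, 1) + (δ_∅, 1)` for a side `S` of the bipartition.

Conversely, the cone lies in `0 ≤ x_e ≤ x_0`, so an interior lattice point has
`0 < x_e < x_0` and hence `x_0 ≥ 2`. If `int(M_G) = y + M_G`, writing `(1, …, 1, 2) = y + m`
forces `m` to have last coordinate `0`, and the only such element of `M_G` is `0`.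
-/

theorem pos_of_mem_interior_of_nonneg {E : Type*} [AddCommGroup E] [Module ℝ E]
    [TopologicalSpace E] [IsTopologicalAddGroup E] [ContinuousSMul ℝ E]
    {S : Set E} {f : E →ₗ[ℝ] ℝ} (hf : Function.Surjective f) (hS : ∀ q ∈ S, 0 ≤ f q)
    {x : E} (hx : x ∈ interior S) : 0 < f x := by
  have hopen : f '' interior S ⊆ interior (Set.Ici 0) :=
    (f.isOpenMap_of_finiteDimensional hf).image_interior_subset S |>.trans
      (interior_mono (Set.image_subset_iff.mpr hS))
  simpa [interior_Ici] using hopen (Set.mem_image_of_mem f hx)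

theorem sum_smul_mem_interior_of_span_eq_top {ι E : Type*} [Fintype ι] [AddCommGroup E] [Module ℝ E]
    [TopologicalSpace E] [IsTopologicalAddGroup E] [ContinuousSMul ℝ E] [T2Space E]
    [FiniteDimensional ℝ E] {v : ι → E} (hv : Submodule.span ℝ (Set.range v) = ⊤)
    {c : ι → ℝ} (hc : ∀ i, 0 < c i) :
    ∑ i, c i • v i ∈
      interior (AddSubmonoid.closure {x | ∃ (t : ℝ) (i : ι), 0 ≤ t ∧ x = t • v i} : Set E) := by
  set T := Fintype.linearCombination ℝ v
  have hT : Function.Surjective T := by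
    rw [← LinearMap.range_eq_top, Fintype.range_linearCombination, hv]
  have hpos : IsOpen (Set.pi Set.univ fun _ : ι => Set.Ioi (0 : ℝ)) :=
    isOpen_set_pi Set.finite_univ fun _ _ => isOpen_Ioi
  refine mem_interior.mpr ⟨T '' Set.pi Set.univ fun _ => Set.Ioi 0, ?_,
    T.isOpenMap_of_finiteDimensional hT _ hpos, c, fun i _ => hc i, rfl⟩
  rintro _ ⟨l, hl, rfl⟩
  exact AddSubmonoid.sum_mem _ fun i _ =>
    AddSubmonoid.subset_closure ⟨l i, i, (hl i trivial).le, rfl⟩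

section CutVec

open Classical
open scoped symmDiff

theorem cutVec_mk (A : Set V) (a b : V) :
    cutVec A s(a, b) = if (a ∈ A ↔ b ∈ A) then 0 else 1 := by
  simp [cutVec]

theorem cutVec_nonneg (A : Set V) (z : Sym2 V) : 0 ≤ cutVec A z := by
  induction z using Sym2.ind with
  | _ a b => rw [cutVec_mk]; split_ifs <;> simp

theorem cutVec_le_one (A : Set V) (z : Sym2 V) : cutVec A z ≤ 1 := by
  induction z using Sym2.ind with
  | _ a b => rw [cutVec_mk]; split_ifs <;> simp

theorem cutVec_empty (z : Sym2 V) : cutVec (∅ : Set V) z = 0 := by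
  induction z using Sym2.ind with
  | _ a b => simp [cutVec_mk]

theorem cutVec_add_cutVec_symmDiff_singleton (A : Set V) {a b : V} (hab : a ≠ b) :
    cutVec A s(a, b) + cutVec (A ∆ {b}) s(a, b) = 1 := by
  have ha : a ∈ A ∆ {b} ↔ a ∈ A := by simp [Set.mem_symmDiff, hab]
  have hb : b ∈ A ∆ {b} ↔ b ∉ A := by simp [Set.mem_symmDiff]
  rw [cutVec_mk, cutVec_mk, ha, hb]
  by_cases a ∈ A <;> by_cases b ∈ A <;> simp_all

-- `A ↦ A ∆ {b}` pairs the subsets cutting `ab` with those not cutting it.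
theorem two_mul_sum_cutVec [Fintype V] {a b : V} (hab : a ≠ b) :
    2 * ∑ A : Set V, cutVec A s(a, b) = Fintype.card (Set V) := by
  have hinv : Function.Involutive fun A : Set V => A ∆ {b} :=
    fun A => symmDiff_symmDiff_cancel_right {b} A
  calc 2 * ∑ A : Set V, cutVec A s(a, b)
      = ∑ A : Set V, cutVec A s(a, b) + ∑ A : Set V, cutVec (A ∆ {b}) s(a, b) := by
        rw [hinv.bijective.sum_comp fun A => cutVec A s(a, b)]; ring
    _ = ∑ _A : Set V, (1 : ℤ) := by
        rw [← Finset.sum_add_distrib]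
        simp_rw [cutVec_add_cutVec_symmDiff_singleton _ hab]
    _ = Fintype.card (Set V) := by simp

theorem cutVec_singleton_add_singleton_sub_pair {a b c d : V} (hab : a ≠ b) (hcd : c ≠ d) :
    cutVec {a} s(c, d) + cutVec {b} s(c, d) - cutVec {a, b} s(c, d) =
      if s(c, d) = s(a, b) then 2 else 0 := by
  simp only [cutVec_mk, Sym2.eq_iff, Set.mem_singleton_iff, Set.mem_insert_iff]
  by_cases c = a <;> by_cases d = a <;> by_cases c = b <;> by_cases d = b <;> simp_all

theorem cutVec_eq_one_of_bipartition {G : SimpleGraph V} {S : Set V}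
    (hS : ∀ ⦃v w⦄, G.Adj v w → ((v ∈ S ∧ w ∉ S) ∨ (w ∈ S ∧ v ∉ S))) {z : Sym2 V}
    (hz : z ∈ G.edgeSet) : cutVec S z = 1 := by
  induction z using Sym2.ind with
  | _ a b => rcases hS hz with ⟨ha, hb⟩ | ⟨hb, ha⟩ <;> simp [cutVec_mk, ha, hb]

end CutVec

section CutCone

open Classical

noncomputable def realCutGen (G : SimpleGraph V) (A : Set V) : (G.edgeSet → ℝ) × ℝ :=
  (fun e => ((cutVec A e.1 : ℤ) : ℝ), 1)

theorem realCutGen_empty (G : SimpleGraph V) : realCutGen G ∅ = (0, 1) := by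
  ext e <;> simp [realCutGen, cutVec_empty]

theorem realCutGen_edge {G : SimpleGraph V} {a b : V} (h : G.Adj a b) :
    realCutGen G {a} + realCutGen G {b} - realCutGen G {a, b} - realCutGen G ∅ =
      (2 : ℝ) • (Pi.single ⟨s(a, b), h⟩ 1, 0) := by
  ext ⟨z, hz⟩
  · induction z using Sym2.ind with
    | _ c d =>
      have key := cutVec_singleton_add_singleton_sub_pair (G.ne_of_adj h) (G.ne_of_adj hz)
      simp only [realCutGen, Prod.fst_sub, Prod.fst_add, Pi.sub_apply, Pi.add_apply,
        cutVec_empty, Prod.smul_fst, Pi.smul_apply, Pi.single_apply, Subtype.ext_iff]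
      rw [← Int.cast_add, ← Int.cast_sub, key]
      split_ifs <;> norm_num
  · simp [realCutGen]

theorem span_range_realCutGen [Fintype V] (G : SimpleGraph V) :
    Submodule.span ℝ (Set.range (realCutGen G)) = ⊤ := by
  let B := (Pi.basisFun ℝ G.edgeSet).prod (Module.Basis.singleton Unit ℝ)
  rw [eq_top_iff, ← B.span_eq, Submodule.span_le]
  rintro _ ⟨⟨⟨z, hz⟩⟩ | ⟨⟩, rfl⟩
  · induction z using Sym2.ind with
    | _ a b =>
      have hB : B (.inl ⟨s(a, b), hz⟩) = (2 : ℝ)⁻¹ • (realCutGen G {a} + realCutGen G {b} -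
          realCutGen G {a, b} - realCutGen G ∅) := by
        rw [realCutGen_edge hz, smul_smul]; simp [B]
      rw [hB]
      refine Submodule.smul_mem _ _ (sub_mem (sub_mem (add_mem ?_ ?_) ?_) ?_) <;>
        exact Submodule.subset_span ⟨_, rfl⟩
  · have hB : B (.inr ()) = realCutGen G ∅ := by simp [B, realCutGen_empty]
    exact hB ▸ Submodule.subset_span ⟨∅, rfl⟩

theorem toRealCut_one_two_eq_sum [Fintype V] (G : SimpleGraph V) :
    toRealCut G (fun _ => 1, 2) =
      ∑ A : Set V, (2 / Fintype.card (Set V) : ℝ) • realCutGen G A := by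
  have hN : (Fintype.card (Set V) : ℝ) ≠ 0 := Nat.cast_ne_zero.mpr Fintype.card_ne_zero
  ext ⟨z, hz⟩
  · induction z using Sym2.ind with
    | _ a b =>
      have hsum : 2 * ∑ A : Set V, ((cutVec A s(a, b) : ℤ) : ℝ) = Fintype.card (Set V) := by
        exact_mod_cast two_mul_sum_cutVec (G.ne_of_adj hz)
      simp only [toRealCut, realCutGen, Prod.fst_sum, Prod.smul_fst, Finset.sum_apply,
        Pi.smul_apply, smul_eq_mul, ← Finset.mul_sum]
      field_simp
      push_cast
      linarith
  · simp [toRealCut, realCutGen, Prod.snd_sum]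
    field_simp

theorem toRealCut_one_two_mem_interior [Fintype V] (G : SimpleGraph V) :
    toRealCut G (fun _ => 1, 2) ∈ interior (cutCone G) := by
  rw [toRealCut_one_two_eq_sum]
  exact sum_smul_mem_interior_of_span_eq_top (span_range_realCutGen G)
    fun _ => div_pos two_pos (Nat.cast_pos.mpr Fintype.card_pos)

end CutCone

section Bounds

open Classical

theorem cutCone_bounds {G : SimpleGraph V} {q : (G.edgeSet → ℝ) × ℝ} (hq : q ∈ cutCone G)
    (e : G.edgeSet) : 0 ≤ q.1 e ∧ q.1 e ≤ q.2 := by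
  induction hq using AddSubmonoid.closure_induction with
  | mem x hx =>
    obtain ⟨c, A, hc, rfl⟩ := hx
    have h0 : (0 : ℝ) ≤ cutVec A e.1 := by exact_mod_cast cutVec_nonneg A e.1
    have h1 : (cutVec A e.1 : ℝ) ≤ 1 := by exact_mod_cast cutVec_le_one A e.1
    simp only [Prod.smul_fst, Prod.smul_snd, Pi.smul_apply, smul_eq_mul, mul_one]
    exact ⟨mul_nonneg hc h0, mul_le_of_le_one_right hc h1⟩
  | zero => simp
  | add x y _ _ hx hy => exact ⟨add_nonneg hx.1 hy.1, add_le_add hx.2 hy.2⟩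

theorem toRealCut_add (G : SimpleGraph V) (p q : (G.edgeSet → ℤ) × ℤ) :
    toRealCut G (p + q) = toRealCut G p + toRealCut G q := by
  ext <;> simp [toRealCut]

theorem toRealCut_mem_cutCone {G : SimpleGraph V} {p : (G.edgeSet → ℤ) × ℤ}
    (hp : p ∈ cutMonoid G) : toRealCut G p ∈ cutCone G := by
  induction hp using AddSubmonoid.closure_induction with
  | mem x hx =>
    obtain ⟨A, rfl⟩ := hx
    exact AddSubmonoid.subset_closure ⟨1, A, zero_le_one, by simp [toRealCut]⟩
  | zero =>
    have h0 : toRealCut G 0 = 0 := by ext <;> simp [toRealCut]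
    exact h0 ▸ AddSubmonoid.zero_mem _
  | add x y _ _ hx hy => exact toRealCut_add G x y ▸ add_mem hx hy

theorem cutMonoid_bounds {G : SimpleGraph V} {p : (G.edgeSet → ℤ) × ℤ} (hp : p ∈ cutMonoid G)
    (e : G.edgeSet) : 0 ≤ p.1 e ∧ p.1 e ≤ p.2 := by
  have h := cutCone_bounds (toRealCut_mem_cutCone hp) e
  simp only [toRealCut] at h
  exact_mod_cast h

theorem eq_zero_of_mem_cutMonoid_of_snd_eq_zero {G : SimpleGraph V} {p : (G.edgeSet → ℤ) × ℤ}
    (hp : p ∈ cutMonoid G) (h : p.2 = 0) : p = 0 := by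
  ext e
  · have := cutMonoid_bounds hp e
    simp only [Prod.fst_zero, Pi.zero_apply]
    omega
  · exact h

theorem interior_cutCone_bounds {G : SimpleGraph V} {q : (G.edgeSet → ℝ) × ℝ}
    (hq : q ∈ interior (cutCone G)) (e : G.edgeSet) : 0 < q.1 e ∧ q.1 e < q.2 := by
  let xe : ((G.edgeSet → ℝ) × ℝ) →ₗ[ℝ] ℝ := (LinearMap.proj e).comp (LinearMap.fst ℝ _ _)
  let x0 : ((G.edgeSet → ℝ) × ℝ) →ₗ[ℝ] ℝ := LinearMap.snd ℝ _ _
  have hxe : Function.Surjective xe := fun r => ⟨(Pi.single e r, 0), by simp [xe]⟩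
  have hgap : Function.Surjective (x0 - xe) := fun r => ⟨(0, r), by simp [xe, x0]⟩
  constructor
  · exact pos_of_mem_interior_of_nonneg hxe (fun q hq => (cutCone_bounds hq e).1) hq
  · have := pos_of_mem_interior_of_nonneg hgap
      (fun q hq => sub_nonneg.mpr (cutCone_bounds hq e).2) hq
    simpa [xe, x0] using this

theorem two_le_of_mem_cutInterior {G : SimpleGraph V} (e : G.edgeSet)
    {p : (G.edgeSet → ℤ) × ℤ} (hp : p ∈ cutInterior G) : 2 ≤ p.2 := by
  have h := interior_cutCone_bounds hp.2 e
  simp only [toRealCut, Int.cast_pos, Int.cast_lt] at h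
  omega

end Bounds

theorem one_two_mem_cutMonoid {G : SimpleGraph V} (hbip : BipartiteG G) :
    ((fun _ => 1, 2) : (G.edgeSet → ℤ) × ℤ) ∈ cutMonoid G := by
  obtain ⟨S, hS⟩ := hbip
  have hsplit : ((fun _ => 1, 2) : (G.edgeSet → ℤ) × ℤ) =
      (fun e => cutVec S e.1, 1) + (fun e => cutVec ∅ e.1, 1) := by
    ext e
    · simp [cutVec_eq_one_of_bipartition hS e.2, cutVec_empty]
    · rfl
  rw [hsplit]
  exact add_mem (AddSubmonoid.subset_closure ⟨S, rfl⟩) (AddSubmonoid.subset_closure ⟨∅, rfl⟩)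

theorem bipartite_gorenstein_generator_general {V : Type} [Fintype V] (G : SimpleGraph V)
    (hbip : BipartiteG G) (hedge : G.edgeSet.Nonempty) :
    (((fun _ => 1, 2) : (G.edgeSet → ℤ) × ℤ) ∈ cutInterior G) ∧
    ∀ y ∈ cutInterior G,
      cutInterior G = (fun m => y + m) '' (cutMonoid G : Set ((G.edgeSet → ℤ) × ℤ)) →
      cutInterior G =
        (fun m => ((fun _ => 1, 2) : (G.edgeSet → ℤ) × ℤ) + m) ''
          (cutMonoid G : Set ((G.edgeSet → ℤ) × ℤ)) := by
  obtain ⟨z, hz⟩ := hedge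
  have hg : ((fun _ => 1, 2) : (G.edgeSet → ℤ) × ℤ) ∈ cutInterior G :=
    ⟨one_two_mem_cutMonoid hbip, toRealCut_one_two_mem_interior G⟩
  refine ⟨hg, fun y hy hgen => ?_⟩
  obtain ⟨m, hm, hym⟩ : ((fun _ => 1, 2) : (G.edgeSet → ℤ) × ℤ) ∈ (fun m => y + m) '' _ :=
    hgen ▸ hg
  have hy2 := two_le_of_mem_cutInterior ⟨z, hz⟩ hy
  have hm2 := cutMonoid_bounds hm ⟨z, hz⟩
  have hdeg : y.2 + m.2 = 2 := congrArg Prod.snd hym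
  have hyg : y = (fun _ => 1, 2) := by
    simpa [eq_zero_of_mem_cutMonoid_of_snd_eq_zero hm (by omega)] using hym
  rwa [← hyg]

/-- For a `K₅`-minor-free bipartite graph with at least one edge and
no induced cycle of length `≥ 6`, the element `(1,…,1,2)` lies in `int(M_G)`; moreover
if `int(M_G) = y + M_G` for some `y ∈ int(M_G)`, then `int(M_G) = (1,…,1,2) + M_G`. -/
theorem bipartite_gorenstein_generator {V : Type} [Fintype V] (G : SimpleGraph V)
    (hK5 : K5Free G) (hbip : BipartiteG G) (hedge : G.edgeSet.Nonempty)
    (hcyc : ∀ n, 6 ≤ n → ¬ HasInducedCycleLen G n) :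
    (((fun _ => 1, 2) : (G.edgeSet → ℤ) × ℤ) ∈ cutInterior G) ∧
    ∀ y ∈ cutInterior G,
      cutInterior G = (fun m => y + m) '' (cutMonoid G : Set ((G.edgeSet → ℤ) × ℤ)) →
      cutInterior G =
        (fun m => ((fun _ => 1, 2) : (G.edgeSet → ℤ) × ℤ) + m) ''
          (cutMonoid G : Set ((G.edgeSet → ℤ) × ℤ)) :=
  bipartite_gorenstein_generator_general G hbip hedge
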